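/- Fix k ≥ 2, positive integers ρk, ρ̄k with ρ+ρ̄=1, Δ > 0, R ∈ ℕ with R ≥ 1, n = k(Rρ̄+ρ). Let V ∈ ℝ^{k×(k-1)}, Λ = diag((√R/Δ)𝟙_{ρ̄k-1}, √((ρ̄+Rρ)/(ρ̄+ρΔ²)), 𝟙_{ρk-1}), and U_⊗ ∈ ℝ^{n×(k-1)} be as defined (with orthonormal bases P_{ρ̄k}, P_{ρk} of the complements of the all-ones vectors). Then V Λ U_⊗ᵀ equals the block matrix Ẑ ∈ ℝ^{k×n} given (after collapsing repeated columns, written as a k×k matrix Ξ with majority columns repeated R times) by: top-left block Δ⁻¹(I_{ρ̄k} - (1/(k(ρ̄+ρΔ²)))𝟙𝟙ᵀ), top-right block -(Δ/(k(ρ̄+ρΔ²)))𝟙_{ρ̄k}𝟙_{ρk}ᵀ, bottom-left block -(1/(k(ρ̄+ρΔ²)))𝟙_{ρk}𝟙_{ρ̄k}ᵀ, bottom-right block I_{ρk} - (Δ²/(k(ρ̄+ρΔ²)))𝟙𝟙ᵀ. In other words, the given V, Λ, U_⊗ constitute a singular value decomposition of the (δ,R)-SEL matrix Ẑ. -/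

import Mathlib

/-!
Entrywise, `V Λ U_⊗ᵀ` is a sum of three contributions. Since `P Pᵀ = I - (1/m) 𝟙𝟙ᵀ`, the outer
singular directions give the centring projections, scaled by `(√R/Δ)(1/√R) = Δ⁻¹` on the majority
block. The normalising square roots of the middle triple `(v, σ, u_⊗)` collapse to
`1/(k(ρ̄+ρΔ²))`, and on the diagonal blocks this rank-one term turns the coefficients `1/(ρ̄k)` and
`1/(ρk)` into the stated ones, e.g. `-1/(ρ̄k) + Δ²ρ/(ρ̄k(ρ̄+ρΔ²)) = -1/(k(ρ̄+ρΔ²))`.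
-/

open Matrix Real

lemma sum_mul_mul_eq_of_mul_transpose_eq {m n α : Type*} [Fintype n] [DecidableEq m]
    [CommRing α] {P : Matrix m n α} {c : α} (h : P * Pᵀ = 1 - c • of fun _ _ => 1) (i i' : m) :
    ∑ j, P i j * P i' j = (if i = i' then 1 else 0) - c := by
  simpa [mul_apply, one_apply] using congr_fun₂ h i i'

lemma div_sqrt_mul_sqrt_div_mul_div_sqrt (s t : ℝ) {k c₁ c₂ : ℝ} (hk : 0 < k) (hc₁ : 0 < c₁)
    (hc₂ : 0 < c₂) :
    s / √(k * c₁) * √(c₂ / c₁) * (t / √(k * c₂)) = s * t / (k * c₁) := by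
  rw [sqrt_div' _ hc₁.le, sqrt_mul hk.le, sqrt_mul hk.le]
  field_simp
  rw [sq_sqrt hk.le, sq_sqrt hc₁.le]
  ring

theorem sel_svd
    (a b k R : ℕ) (hk2 : 2 ≤ k)
    (hR : 1 ≤ R)
    (ρ ρbar Δ : ℝ) (hρ : 0 < ρ) (hρbar : 0 < ρbar)
    (hΔ : 0 < Δ) (hak : (a : ℝ) = ρbar * k) (hbk : (b : ℝ) = ρ * k)
    (P1 : Matrix (Fin a) (Fin (a - 1)) ℝ) (P2 : Matrix (Fin b) (Fin (b - 1)) ℝ)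
    (hP1proj : P1 * P1.transpose =
      (1 : Matrix (Fin a) (Fin a) ℝ) - ((a : ℝ))⁻¹ • Matrix.of (fun _ _ => (1 : ℝ)))
    (hP2proj : P2 * P2.transpose =
      (1 : Matrix (Fin b) (Fin b) ℝ) - ((b : ℝ))⁻¹ • Matrix.of (fun _ _ => (1 : ℝ)))
    (V : Matrix (Fin a ⊕ Fin b) ((Fin (a - 1) ⊕ Unit) ⊕ Fin (b - 1)) ℝ)
    (hV : V = Matrix.of fun r c =>
      match r, c with
      | Sum.inl i, Sum.inl (Sum.inl j) => P1 i j
      | Sum.inl _, Sum.inl (Sum.inr _) =>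
          -Δ * Real.sqrt (ρ / ρbar) / Real.sqrt (k * (ρbar + ρ * Δ ^ 2))
      | Sum.inl _, Sum.inr _ => 0
      | Sum.inr _, Sum.inl (Sum.inl _) => 0
      | Sum.inr _, Sum.inl (Sum.inr _) =>
          Real.sqrt (ρbar / ρ) / Real.sqrt (k * (ρbar + ρ * Δ ^ 2))
      | Sum.inr i, Sum.inr j => P2 i j)
    (Λ : Matrix ((Fin (a - 1) ⊕ Unit) ⊕ Fin (b - 1))
        ((Fin (a - 1) ⊕ Unit) ⊕ Fin (b - 1)) ℝ)
    (hΛ : Λ = Matrix.diagonal fun c =>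
      match c with
      | Sum.inl (Sum.inl _) => Real.sqrt R / Δ
      | Sum.inl (Sum.inr _) => Real.sqrt ((ρbar + R * ρ) / (ρbar + ρ * Δ ^ 2))
      | Sum.inr _ => 1)
    (U : Matrix ((Fin a × Fin R) ⊕ Fin b) ((Fin (a - 1) ⊕ Unit) ⊕ Fin (b - 1)) ℝ)
    (hU : U = Matrix.of fun r c =>
      match r, c with
      | Sum.inl (i, _), Sum.inl (Sum.inl j) => P1 i j / Real.sqrt R
      | Sum.inl _, Sum.inl (Sum.inr _) =>
          -Real.sqrt (ρ / ρbar) / Real.sqrt (k * (ρbar + R * ρ))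
      | Sum.inl _, Sum.inr _ => 0
      | Sum.inr _, Sum.inl (Sum.inl _) => 0
      | Sum.inr _, Sum.inl (Sum.inr _) =>
          Real.sqrt (ρbar / ρ) / Real.sqrt (k * (ρbar + R * ρ))
      | Sum.inr i, Sum.inr j => P2 i j)
    (Z : Matrix (Fin a ⊕ Fin b) ((Fin a × Fin R) ⊕ Fin b) ℝ)
    (hZ : Z = Matrix.of fun r c =>
      match r, c with
      | Sum.inl i, Sum.inl (i', _) =>
          Δ⁻¹ * ((if i = i' then 1 else 0) - 1 / (k * (ρbar + ρ * Δ ^ 2)))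
      | Sum.inl _, Sum.inr _ => -Δ / (k * (ρbar + ρ * Δ ^ 2))
      | Sum.inr _, Sum.inl _ => -1 / (k * (ρbar + ρ * Δ ^ 2))
      | Sum.inr i, Sum.inr i' =>
          (if i = i' then 1 else 0) - Δ ^ 2 / (k * (ρbar + ρ * Δ ^ 2))) :
    V * Λ * U.transpose = Z := by
  subst hV hΛ hU hZ
  have hk : (0 : ℝ) < k := by exact_mod_cast (show 0 < k by omega)
  have hc₁ : 0 < ρbar + ρ * Δ ^ 2 := by positivity
  have hc₂ : 0 < ρbar + R * ρ := by positivity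
  have hsR : √(R : ℝ) ≠ 0 := (sqrt_pos.2 (by exact_mod_cast hR)).ne'
  have hmix : √(ρ / ρbar) * √(ρbar / ρ) = 1 := by
    rw [← inv_div, sqrt_inv, inv_mul_cancel₀ (by positivity)]
  have hrank_one := fun s t => div_sqrt_mul_sqrt_div_mul_div_sqrt s t hk hc₁ hc₂
  ext r c
  rw [mul_apply]
  simp only [mul_diagonal, transpose_apply, of_apply]
  rcases r with i | i <;> rcases c with ⟨i', -⟩ | i' <;>
    simp only [Fintype.sum_sum_type, Fintype.sum_unique, mul_zero, zero_mul, mul_one,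
      Finset.sum_const_zero, add_zero, zero_add, hrank_one]
  · have hblock : ∑ x, P1 i x * (√R / Δ) * (P1 i' x / √R) = Δ⁻¹ * ∑ x, P1 i x * P1 i' x := by
      rw [Finset.mul_sum]
      congr! 1 with x
      field_simp
    have hnum : -Δ * √(ρ / ρbar) * -√(ρ / ρbar) = Δ * (ρ / ρbar) := by
      linear_combination Δ * mul_self_sqrt (div_pos hρ hρbar).le
    rw [hblock, sum_mul_mul_eq_of_mul_transpose_eq hP1proj, hak, hnum]
    field_simp
    ring
  · rw [mul_assoc _ √(ρ / ρbar), hmix]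
    ring
  · rw [mul_neg, mul_comm, hmix]
  · rw [sum_mul_mul_eq_of_mul_transpose_eq hP2proj, hbk, mul_self_sqrt (div_pos hρbar hρ).le]
    field_simp
    ring
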